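/- Let L be a flag simplicial complex with at least two vertices that is not a single simplex. Then there exist two distinct vertices v₁, v₂ of L not joined by an edge, and the graph product G over L decomposes as the amalgamated free product G = G₁ ∗_{G₀} G₂, where G₁, G₂, G₀ are the graph products over the full subcomplexes spanned by V − {v₁}, V − {v₂}, and V − {v₁, v₂} respectively. -/

import Mathlib

/-- An abstract simplicial complex on a vertex type `V`. -/
structure AbstractComplex (V : Type*) where
  faces : Set (Finset V)
  nonempty_of_mem : ∀ {s : Finset V}, s ∈ faces → s.Nonempty
  down_closed : ∀ {s t : Finset V}, s ∈ faces → t ⊆ s → t.Nonempty → t ∈ faces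

/-- The edge (adjacency) relation of the 1-skeleton of `L`. -/
def adjOf {V : Type*} [DecidableEq V] (L : AbstractComplex V) (v w : V) : Prop :=
  v ≠ w ∧ ({v, w} : Finset V) ∈ L.faces

open scoped commutatorElement in
/-- The normal subgroup of commutator relations defining the graph product. -/
def graphProductRel {V : Type*} (adj : V → V → Prop) (G : V → Type*)
    [∀ v, Group (G v)] : Subgroup (Monoid.CoprodI G) :=
  Subgroup.normalClosure
    {x | ∃ (v w : V) (_ : adj v w) (a : G v) (b : G w),
      x = ⁅Monoid.CoprodI.of a, Monoid.CoprodI.of b⁆}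

instance graphProductRelNormal {V : Type*} (adj : V → V → Prop) (G : V → Type*)
    [∀ v, Group (G v)] : (graphProductRel adj G).Normal :=
  Subgroup.normalClosure_normal

/-- The graph product of the groups `G v` over the simplicial graph `adj`. -/
def graphProduct {V : Type*} (adj : V → V → Prop) (G : V → Type*)
    [∀ v, Group (G v)] : Type _ :=
  Monoid.CoprodI G ⧸ graphProductRel adj G

instance graphProductGroup {V : Type*} (adj : V → V → Prop) (G : V → Type*)
    [∀ v, Group (G v)] : Group (graphProduct adj G) :=
  inferInstanceAs (Group (Monoid.CoprodI G ⧸ graphProductRel adj G))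

/-- The canonical map from a vertex group to the graph product. -/
def graphProductOf {V : Type*} (adj : V → V → Prop) (G : V → Type*)
    [∀ v, Group (G v)] (v : V) : G v →* graphProduct adj G :=
  (QuotientGroup.mk' (graphProductRel adj G)).comp Monoid.CoprodI.of

/-- The graph product over the full subcomplex of `L` spanned by `{v | P v}`. -/
abbrev restGraphProduct {V : Type} [DecidableEq V] (L : AbstractComplex V)
    (G : V → Type) [∀ v, Group (G v)] (P : V → Prop) : Type :=
  graphProduct (fun a b : {v : V // P v} => adjOf L a.1 b.1) (fun a : {v : V // P v} => G a.1)

instance instBoolRecGroup {X Y : Type} [gx : Group X] [gy : Group Y] (b : Bool) :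
    Group (Bool.rec (motive := fun _ => Type) Y X b) :=
  Bool.rec (motive := fun b => Group (Bool.rec (motive := fun _ => Type) Y X b)) gy gx b

/-- The family of two homomorphisms `ι₁ : G₀ →* G₁`, `ι₂ : G₀ →* G₂`, indexed by `Bool`,
whose pushout `Monoid.PushoutI` is the amalgamated free product `G₁ ∗_{G₀} G₂`. -/
def amalgFam {G₀ G₁ G₂ : Type} [Group G₀] [Group G₁] [Group G₂]
    (ι₁ : G₀ →* G₁) (ι₂ : G₀ →* G₂) :
    ∀ b : Bool, G₀ →* (Bool.rec (motive := fun _ => Type) G₂ G₁ b) :=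
  fun b => Bool.rec (motive := fun b => G₀ →* Bool.rec (motive := fun _ => Type) G₂ G₁ b)
    ι₂ ι₁ b

/-!
A flag complex that is not a simplex misses some edge `{v₁, v₂}`. Then every vertex lies in
`V − {v₁}` or in `V − {v₂}`, and every edge lies in one of these two full subcomplexes.
Consequently a family of homomorphisms on the vertex groups with commuting images on edges is
the same thing as a pair of such families on the two subcomplexes agreeing on their
intersection, which is the universal property of `G₁ ∗_{G₀} G₂`.
-/

open Monoid

namespace graphProduct

section UniversalProperty

variable {V : Type*} {adj : V → V → Prop} {G : V → Type*} [∀ v, Group (G v)]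
  {M : Type*} [Group M]

open scoped commutatorElement in
theorem of_commute {v w : V} (h : adj v w) (a : G v) (b : G w) :
    Commute (graphProductOf adj G v a) (graphProductOf adj G w b) := by
  rw [← commutatorElement_eq_one_iff_commute]
  exact (map_commutatorElement (QuotientGroup.mk' (graphProductRel adj G)) _ _).symm.trans <|
    (QuotientGroup.eq_one_iff _).mpr <| Subgroup.subset_normalClosure ⟨v, w, h, a, b, rfl⟩

open scoped commutatorElement in
theorem graphProductRel_le_ker (f : ∀ v, G v →* M)
    (hf : ∀ v w, adj v w → ∀ (a : G v) (b : G w), Commute (f v a) (f w b)) :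
    graphProductRel adj G ≤ (CoprodI.lift f).ker :=
  Subgroup.normalClosure_le_normal <| by
    rintro _ ⟨v, w, hvw, a, b, rfl⟩
    rw [SetLike.mem_coe, MonoidHom.mem_ker, map_commutatorElement, CoprodI.lift_of,
      CoprodI.lift_of, commutatorElement_eq_one_iff_commute]
    exact hf v w hvw a b

def lift (f : ∀ v, G v →* M)
    (hf : ∀ v w, adj v w → ∀ (a : G v) (b : G w), Commute (f v a) (f w b)) :
    graphProduct adj G →* M :=
  QuotientGroup.lift _ (CoprodI.lift f) (graphProductRel_le_ker f hf)

@[simp]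
theorem lift_of (f : ∀ v, G v →* M)
    (hf : ∀ v w, adj v w → ∀ (a : G v) (b : G w), Commute (f v a) (f w b))
    (v : V) (a : G v) :
    lift f hf (graphProductOf adj G v a) = f v a :=
  (QuotientGroup.lift_mk' _ _ _).trans (CoprodI.lift_of f a)

theorem hom_ext {f g : graphProduct adj G →* M}
    (h : ∀ (v : V) (a : G v), f (graphProductOf adj G v a) = g (graphProductOf adj G v a)) :
    f = g :=
  QuotientGroup.monoidHom_ext _ <| CoprodI.ext_hom _ _ fun v => MonoidHom.ext (h v)

end UniversalProperty

end graphProduct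

section Restriction

variable {V : Type} (adj : V → V → Prop) (G : V → Type) [∀ v, Group (G v)]

abbrev subGraphProduct (P : V → Prop) : Type :=
  graphProduct (fun a b : {v // P v} => adj a.1 b.1) (fun a => G a.1)

namespace subGraphProduct

variable {adj G} (P : V → Prop)

abbrev of {v : V} (h : P v) : G v →* subGraphProduct adj G P :=
  graphProductOf (fun a b : {v // P v} => adj a.1 b.1) (fun a => G a.1) ⟨v, h⟩

def inclusion : subGraphProduct adj G P →* graphProduct adj G :=
  graphProduct.lift (fun a => graphProductOf adj G a.1) fun _ _ hab => graphProduct.of_commute hab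

@[simp]
theorem inclusion_of {v : V} (h : P v) (g : G v) :
    inclusion P (of P h g) = graphProductOf adj G v g :=
  graphProduct.lift_of (adj := fun a b : {v // P v} => adj a.1 b.1) (G := fun a => G a.1)
    _ _ ⟨v, h⟩ g

theorem of_commute {v w : V} (hv : P v) (hw : P w) (hvw : adj v w) (a : G v) (b : G w) :
    Commute (of (adj := adj) P hv a) (of P hw b) :=
  graphProduct.of_commute (adj := fun a b : {v // P v} => adj a.1 b.1) (G := fun a => G a.1)
    (v := ⟨v, hv⟩) (w := ⟨w, hw⟩) hvw a b

def IsInclusion {P Q : V → Prop} (hPQ : ∀ v, P v → Q v)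
    (ι : subGraphProduct adj G P →* subGraphProduct adj G Q) : Prop :=
  ∀ (v : V) (h : P v) (g : G v), ι (of P h g) = of Q (hPQ v h) g

theorem IsInclusion.inclusion_comp {P Q : V → Prop} {hPQ : ∀ v, P v → Q v}
    {ι : subGraphProduct adj G P →* subGraphProduct adj G Q} (hι : IsInclusion hPQ ι) :
    (inclusion Q).comp ι = inclusion P :=
  graphProduct.hom_ext fun ⟨v, h⟩ g =>
    (congrArg (inclusion Q) (hι v h g)).trans ((inclusion_of Q _ g).trans (inclusion_of P h g).symm)

end subGraphProduct

end Restriction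

section Gluing

open subGraphProduct

namespace graphProduct

variable {V : Type} {adj : V → V → Prop} {G : V → Type} [∀ v, Group (G v)] {P₁ P₂ : V → Prop}
  {ι₁ : subGraphProduct adj G (fun v => P₁ v ∧ P₂ v) →* subGraphProduct adj G P₁}
  {ι₂ : subGraphProduct adj G (fun v => P₁ v ∧ P₂ v) →* subGraphProduct adj G P₂}
  (hcover : ∀ v, P₁ v ∨ P₂ v) (hedge : ∀ v w, adj v w → P₁ v ∧ P₁ w ∨ P₂ v ∧ P₂ w)

theorem pushoutI_of_true_eq_of_false (hι₁ : IsInclusion (fun _ => And.left) ι₁)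
    (hι₂ : IsInclusion (fun _ => And.right) ι₂) {v : V} (h : P₁ v ∧ P₂ v) (g : G v) :
    PushoutI.of (φ := amalgFam ι₁ ι₂) true (of P₁ h.1 g) =
      PushoutI.of (φ := amalgFam ι₁ ι₂) false (of P₂ h.2 g) := by
  rw [← hι₁ v h, ← hι₂ v h]
  exact (PushoutI.of_apply_eq_base _ true _).trans (PushoutI.of_apply_eq_base _ false _).symm

variable (ι₁ ι₂) in
open Classical in
noncomputable def toPushoutIVertex (v : V) : G v →* PushoutI (amalgFam ι₁ ι₂) :=
  if h : P₁ v then (PushoutI.of true).comp (of P₁ h)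
  else (PushoutI.of false).comp (of P₂ ((hcover v).resolve_left h))

theorem toPushoutIVertex_of_left {v : V} (h : P₁ v) (g : G v) :
    toPushoutIVertex ι₁ ι₂ hcover v g = PushoutI.of true (of P₁ h g) := by
  rw [toPushoutIVertex, dif_pos h]
  rfl

theorem toPushoutIVertex_of_right (hι₁ : IsInclusion (fun _ => And.left) ι₁)
    (hι₂ : IsInclusion (fun _ => And.right) ι₂) {v : V} (h : P₂ v) (g : G v) :
    toPushoutIVertex ι₁ ι₂ hcover v g = PushoutI.of false (of P₂ h g) := by
  by_cases h₁ : P₁ v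
  · rw [toPushoutIVertex_of_left hcover h₁, pushoutI_of_true_eq_of_false hι₁ hι₂ ⟨h₁, h⟩]
  · rw [toPushoutIVertex, dif_neg h₁]
    rfl

variable (hι₁ : IsInclusion (fun _ => And.left) ι₁) (hι₂ : IsInclusion (fun _ => And.right) ι₂)

noncomputable def toPushoutI : graphProduct adj G →* PushoutI (amalgFam ι₁ ι₂) :=
  lift (toPushoutIVertex ι₁ ι₂ hcover) fun v w hvw a b => by
    rcases hedge v w hvw with ⟨hv, hw⟩ | ⟨hv, hw⟩
    · rw [toPushoutIVertex_of_left hcover hv, toPushoutIVertex_of_left hcover hw]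
      exact (subGraphProduct.of_commute P₁ hv hw hvw a b).map _
    · rw [toPushoutIVertex_of_right hcover hι₁ hι₂ hv,
        toPushoutIVertex_of_right hcover hι₁ hι₂ hw]
      exact (subGraphProduct.of_commute P₂ hv hw hvw a b).map _

theorem toPushoutI_of_left {v : V} (h : P₁ v) (g : G v) :
    toPushoutI hcover hedge hι₁ hι₂ (graphProductOf adj G v g) = PushoutI.of true (of P₁ h g) :=
  (lift_of _ _ v g).trans (toPushoutIVertex_of_left hcover h g)

theorem toPushoutI_of_right {v : V} (h : P₂ v) (g : G v) :
    toPushoutI hcover hedge hι₁ hι₂ (graphProductOf adj G v g) =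
      PushoutI.of false (of P₂ h g) :=
  (lift_of _ _ v g).trans (toPushoutIVertex_of_right hcover hι₁ hι₂ h g)

noncomputable def ofPushoutI : PushoutI (amalgFam ι₁ ι₂) →* graphProduct adj G :=
  PushoutI.lift
    (fun b => Bool.rec (motive := fun b => Bool.rec (motive := fun _ => Type)
        (subGraphProduct adj G P₂) (subGraphProduct adj G P₁) b →* graphProduct adj G)
      (inclusion P₂) (inclusion P₁) b)
    (inclusion _) fun b => by
      cases b
      exacts [hι₂.inclusion_comp, hι₁.inclusion_comp]

theorem ofPushoutI_of_true {v : V} (h : P₁ v) (g : G v) :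
    ofPushoutI hι₁ hι₂ (PushoutI.of true (of P₁ h g)) = graphProductOf adj G v g :=
  (PushoutI.lift_of _ _ _ _).trans (inclusion_of P₁ h g)

theorem ofPushoutI_of_false {v : V} (h : P₂ v) (g : G v) :
    ofPushoutI hι₁ hι₂ (PushoutI.of false (of P₂ h g)) = graphProductOf adj G v g :=
  (PushoutI.lift_of _ _ _ _).trans (inclusion_of P₂ h g)

theorem ofPushoutI_comp_toPushoutI :
    (ofPushoutI hι₁ hι₂).comp (toPushoutI hcover hedge hι₁ hι₂) = MonoidHom.id _ :=
  hom_ext fun v g => by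
    rw [MonoidHom.comp_apply, MonoidHom.id_apply]
    rcases hcover v with h | h
    · rw [toPushoutI_of_left hcover hedge hι₁ hι₂ h, ofPushoutI_of_true]
    · rw [toPushoutI_of_right hcover hedge hι₁ hι₂ h, ofPushoutI_of_false]

theorem toPushoutI_comp_ofPushoutI :
    (toPushoutI hcover hedge hι₁ hι₂).comp (ofPushoutI hι₁ hι₂) = MonoidHom.id _ := by
  refine PushoutI.hom_ext_nonempty fun b => ?_
  cases b
  · refine hom_ext fun ⟨v, h⟩ g => ?_
    rw [MonoidHom.id_comp, MonoidHom.comp_apply, MonoidHom.comp_apply,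
      ofPushoutI_of_false hι₁ hι₂ h, toPushoutI_of_right hcover hedge hι₁ hι₂ h]
  · refine hom_ext fun ⟨v, h⟩ g => ?_
    rw [MonoidHom.id_comp, MonoidHom.comp_apply, MonoidHom.comp_apply,
      ofPushoutI_of_true hι₁ hι₂ h, toPushoutI_of_left hcover hedge hι₁ hι₂ h]

noncomputable def pushoutIEquiv : graphProduct adj G ≃* PushoutI (amalgFam ι₁ ι₂) :=
  (toPushoutI hcover hedge hι₁ hι₂).toMulEquiv (ofPushoutI hι₁ hι₂)
    (ofPushoutI_comp_toPushoutI hcover hedge hι₁ hι₂)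
    (toPushoutI_comp_ofPushoutI hcover hedge hι₁ hι₂)

theorem pushoutIEquiv_of_left {v : V} (h : P₁ v) (g : G v) :
    pushoutIEquiv hcover hedge hι₁ hι₂ (graphProductOf adj G v g) =
      PushoutI.of true (of P₁ h g) :=
  toPushoutI_of_left hcover hedge hι₁ hι₂ h g

theorem pushoutIEquiv_of_right {v : V} (h : P₂ v) (g : G v) :
    pushoutIEquiv hcover hedge hι₁ hι₂ (graphProductOf adj G v g) =
      PushoutI.of false (of P₂ h g) :=
  toPushoutI_of_right hcover hedge hι₁ hι₂ h g

end graphProduct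

end Gluing

namespace AbstractComplex

variable {V : Type} [DecidableEq V] {L : AbstractComplex V}

theorem exists_pair_notMem_faces [Fintype V] [Nonempty V]
    (hflag : ∀ s : Finset V, s.Nonempty →
      (∀ v ∈ s, ∀ w ∈ s, v ≠ w → ({v, w} : Finset V) ∈ L.faces) → s ∈ L.faces)
    (hnotsimplex : (Finset.univ : Finset V) ∉ L.faces) :
    ∃ v₁ v₂ : V, v₁ ≠ v₂ ∧ ({v₁, v₂} : Finset V) ∉ L.faces := by
  by_contra! h
  exact hnotsimplex (hflag _ Finset.univ_nonempty fun v _ w _ => h v w)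

theorem adjOf_ne_or_ne {v₁ v₂ v w : V} (hne : v₁ ≠ v₂) (hface : ({v₁, v₂} : Finset V) ∉ L.faces)
    (hvw : adjOf L v w) : v ≠ v₁ ∧ w ≠ v₁ ∨ v ≠ v₂ ∧ w ≠ v₂ := by
  have := hvw.2
  grind [Finset.pair_comm]

end AbstractComplex

theorem stmt_3_general {V : Type} [Fintype V] [DecidableEq V]
    (L : AbstractComplex V)
    (hflag : ∀ s : Finset V, s.Nonempty →
      (∀ v ∈ s, ∀ w ∈ s, v ≠ w → ({v, w} : Finset V) ∈ L.faces) → s ∈ L.faces)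
    (hcard : 2 ≤ Fintype.card V)
    (hnotsimplex : (Finset.univ : Finset V) ∉ L.faces)
    (G : V → Type) [∀ v, Group (G v)] :
    ∃ v₁ v₂ : V, v₁ ≠ v₂ ∧ ¬ adjOf L v₁ v₂ ∧
      ∀ (ι₁ : restGraphProduct L G (fun v => v ≠ v₁ ∧ v ≠ v₂) →*
          restGraphProduct L G (fun v => v ≠ v₁))
        (ι₂ : restGraphProduct L G (fun v => v ≠ v₁ ∧ v ≠ v₂) →*
          restGraphProduct L G (fun v => v ≠ v₂)),
        -- `ι₁` is the natural inclusion `G₀ → G₁`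
        (∀ (a : {v : V // v ≠ v₁ ∧ v ≠ v₂}) (g : G a.1),
          ι₁ (graphProductOf _ _ a g) =
            graphProductOf (fun a b : {v : V // v ≠ v₁} => adjOf L a.1 b.1)
              (fun a : {v : V // v ≠ v₁} => G a.1) ⟨a.1, a.2.1⟩ g) →
        -- `ι₂` is the natural inclusion `G₀ → G₂`
        (∀ (a : {v : V // v ≠ v₁ ∧ v ≠ v₂}) (g : G a.1),
          ι₂ (graphProductOf _ _ a g) =
            graphProductOf (fun a b : {v : V // v ≠ v₂} => adjOf L a.1 b.1)
              (fun a : {v : V // v ≠ v₂} => G a.1) ⟨a.1, a.2.2⟩ g) →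
        -- the amalgamated product decomposition `G ≅ G₁ ∗_{G₀} G₂`
        ∃ ψ : graphProduct (adjOf L) G ≃* Monoid.PushoutI (amalgFam ι₁ ι₂),
          (∀ (v : V) (h : v ≠ v₁) (g : G v),
            ψ (graphProductOf (adjOf L) G v g) =
              Monoid.PushoutI.of (φ := amalgFam ι₁ ι₂) true
                (graphProductOf (fun a b : {v : V // v ≠ v₁} => adjOf L a.1 b.1)
                  (fun a : {v : V // v ≠ v₁} => G a.1) ⟨v, h⟩ g)) ∧
          (∀ (v : V) (h : v ≠ v₂) (g : G v),
            ψ (graphProductOf (adjOf L) G v g) =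
              Monoid.PushoutI.of (φ := amalgFam ι₁ ι₂) false
                (graphProductOf (fun a b : {v : V // v ≠ v₂} => adjOf L a.1 b.1)
                  (fun a : {v : V // v ≠ v₂} => G a.1) ⟨v, h⟩ g)) := by
  have : Nonempty V := Fintype.card_pos_iff.mp (by omega)
  obtain ⟨v₁, v₂, hne, hface⟩ := L.exists_pair_notMem_faces hflag hnotsimplex
  refine ⟨v₁, v₂, hne, fun h => hface h.2, fun ι₁ ι₂ hι₁ hι₂ => ?_⟩
  have hincl₁ : subGraphProduct.IsInclusion (fun _ => And.left) ι₁ := fun v h g => hι₁ ⟨v, h⟩ g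
  have hincl₂ : subGraphProduct.IsInclusion (fun _ => And.right) ι₂ := fun v h g => hι₂ ⟨v, h⟩ g
  have hcover (v : V) : v ≠ v₁ ∨ v ≠ v₂ := (Ne.ne_or_ne v hne).imp Ne.symm Ne.symm
  have hedge (v w : V) := AbstractComplex.adjOf_ne_or_ne (v := v) (w := w) hne hface
  exact ⟨graphProduct.pushoutIEquiv hcover hedge hincl₁ hincl₂,
    fun _ => graphProduct.pushoutIEquiv_of_left hcover hedge hincl₁ hincl₂,
    fun _ => graphProduct.pushoutIEquiv_of_right hcover hedge hincl₁ hincl₂⟩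

/-- Let `L` be a finite flag simplicial complex with at least two
vertices that is not a single simplex, and let `{G v}` be nontrivial groups.  Then there
exist distinct vertices `v₁, v₂` not joined by an edge such that the graph product `G`
over `L` decomposes as the amalgamated free product `G₁ ∗_{G₀} G₂`, where `G₁`, `G₂`,
`G₀` are the graph products over the full subcomplexes spanned by `V − {v₁}`, `V − {v₂}`
and `V − {v₁, v₂}` respectively (with `ι₁, ι₂` the natural inclusions of `G₀`). -/
theorem stmt_3 {V : Type} [Fintype V] [DecidableEq V]
    (L : AbstractComplex V)
    (hvert : ∀ v : V, ({v} : Finset V) ∈ L.faces)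
    (hflag : ∀ s : Finset V, s.Nonempty →
      (∀ v ∈ s, ∀ w ∈ s, v ≠ w → ({v, w} : Finset V) ∈ L.faces) → s ∈ L.faces)
    (hcard : 2 ≤ Fintype.card V)
    (hnotsimplex : (Finset.univ : Finset V) ∉ L.faces)
    (G : V → Type) [∀ v, Group (G v)] [∀ v, Nontrivial (G v)] :
    ∃ v₁ v₂ : V, v₁ ≠ v₂ ∧ ¬ adjOf L v₁ v₂ ∧
      ∀ (ι₁ : restGraphProduct L G (fun v => v ≠ v₁ ∧ v ≠ v₂) →*
          restGraphProduct L G (fun v => v ≠ v₁))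
        (ι₂ : restGraphProduct L G (fun v => v ≠ v₁ ∧ v ≠ v₂) →*
          restGraphProduct L G (fun v => v ≠ v₂)),
        -- `ι₁` is the natural inclusion `G₀ → G₁`
        (∀ (a : {v : V // v ≠ v₁ ∧ v ≠ v₂}) (g : G a.1),
          ι₁ (graphProductOf _ _ a g) =
            graphProductOf (fun a b : {v : V // v ≠ v₁} => adjOf L a.1 b.1)
              (fun a : {v : V // v ≠ v₁} => G a.1) ⟨a.1, a.2.1⟩ g) →
        -- `ι₂` is the natural inclusion `G₀ → G₂`
        (∀ (a : {v : V // v ≠ v₁ ∧ v ≠ v₂}) (g : G a.1),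
          ι₂ (graphProductOf _ _ a g) =
            graphProductOf (fun a b : {v : V // v ≠ v₂} => adjOf L a.1 b.1)
              (fun a : {v : V // v ≠ v₂} => G a.1) ⟨a.1, a.2.2⟩ g) →
        -- the amalgamated product decomposition `G ≅ G₁ ∗_{G₀} G₂`
        ∃ ψ : graphProduct (adjOf L) G ≃* Monoid.PushoutI (amalgFam ι₁ ι₂),
          (∀ (v : V) (h : v ≠ v₁) (g : G v),
            ψ (graphProductOf (adjOf L) G v g) =
              Monoid.PushoutI.of (φ := amalgFam ι₁ ι₂) true
                (graphProductOf (fun a b : {v : V // v ≠ v₁} => adjOf L a.1 b.1)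
                  (fun a : {v : V // v ≠ v₁} => G a.1) ⟨v, h⟩ g)) ∧
          (∀ (v : V) (h : v ≠ v₂) (g : G v),
            ψ (graphProductOf (adjOf L) G v g) =
              Monoid.PushoutI.of (φ := amalgFam ι₁ ι₂) false
                (graphProductOf (fun a b : {v : V // v ≠ v₂} => adjOf L a.1 b.1)
                  (fun a : {v : V // v ≠ v₂} => G a.1) ⟨v, h⟩ g)) :=
  stmt_3_general L hflag hcard hnotsimplex G
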